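/- Let γ : [0,1] → ℝ³ be a C² regular curve and a = γ(t₀). If a point b ≠ a on the sub-arc γ([t₀, v]) lies on the normal plane to γ at t₀, then the total curvature of the sub-arc γ([t₀, v]) is at least π/2. -/

import Mathlib

open Filter Set intervalIntegral
open scoped Topology

/-- The cross product of two vectors of Euclidean 3-space. -/
noncomputable def cross3 (v w : EuclideanSpace ℝ (Fin 3)) : EuclideanSpace ℝ (Fin 3) :=
  (WithLp.equiv 2 (Fin 3 → ℝ)).symm
    (crossProduct (WithLp.equiv 2 (Fin 3 → ℝ) v) (WithLp.equiv 2 (Fin 3 → ℝ) w))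

/-- The total curvature of a regular `C²` arc `γ` on `[u, v]`, computed from first and second
derivative functions `γ'`, `γ''` as `∫ |γ' × γ''| / |γ'|²` (equal to `∫ |κ| ds`). -/
noncomputable def arcTotalCurvature (γ' γ'' : ℝ → EuclideanSpace ℝ (Fin 3)) (u v : ℝ) : ℝ :=
  ∫ t in u..v, ‖cross3 (γ' t) (γ'' t)‖ / ‖γ' t‖ ^ 2

/-- Lagrange's identity for the cross product in `ℝ³`. -/
lemma cross3_norm_sq (a b : EuclideanSpace ℝ (Fin 3)) :
    ‖cross3 a b‖ ^ 2 = ‖a‖ ^ 2 * ‖b‖ ^ 2 - (inner ℝ a b : ℝ) ^ 2 := by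
  rw [← real_inner_self_eq_norm_sq, ← real_inner_self_eq_norm_sq, ← real_inner_self_eq_norm_sq]
  simp only [cross3, PiLp.inner_apply, RCLike.inner_apply, conj_trivial,
    crossProduct, Fin.sum_univ_three]
  simp only [LinearMap.mk₂_apply]
  simp [Matrix.cons_val_zero, Matrix.cons_val_one, Matrix.head_cons]
  ring

lemma cross3_norm (a b : EuclideanSpace ℝ (Fin 3)) :
    ‖cross3 a b‖ = Real.sqrt (‖a‖ ^ 2 * ‖b‖ ^ 2 - (inner ℝ a b : ℝ) ^ 2) := by
  rw [← cross3_norm_sq, Real.sqrt_sq (norm_nonneg _)]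

/-- Key comparison lemma: if `g` starts at `1`, ends at `0`, and `|g'| ≤ k √(1-g²)`,
then `∫ k ≥ π/2`. -/
lemma key_arcsin_bound {k g g' : ℝ → ℝ} {a b : ℝ} (hab : a < b)
    (hkc : Continuous k) (hk0 : ∀ t, 0 ≤ k t)
    (hg : ∀ t ∈ Icc a b, HasDerivAt g (g' t) t)
    (hbound : ∀ t ∈ Icc a b, |g' t| ≤ k t * Real.sqrt (1 - g t ^ 2))
    (hga : g a = 1) (hgb : g b = 0) :
    Real.pi / 2 ≤ ∫ t in a..b, k t := by
  have hgc : ContinuousOn g (Icc a b) := fun t ht => (hg t ht).continuousAt.continuousWithinAt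
  have hC : ∀ δ ∈ Ioo (0:ℝ) 1, Real.arcsin (1 - δ) ≤ ∫ t in a..b, k t := by
    intro δ hδ
    -- last time g ≥ 1 - δ
    have hScl : IsClosed (Icc a b ∩ g ⁻¹' (Ici (1 - δ))) :=
      hgc.preimage_isClosed_of_isClosed isClosed_Icc isClosed_Ici
    have hScpt : IsCompact (Icc a b ∩ g ⁻¹' (Ici (1 - δ))) :=
      isCompact_Icc.of_isClosed_subset hScl inter_subset_left
    obtain ⟨c, hcS, hcub⟩ := hScpt.exists_isGreatest
      ⟨a, left_mem_Icc.2 hab.le, by simp [hga]; linarith [hδ.1]⟩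
    obtain ⟨hcab, hgc1⟩ := hcS
    have hgc1 : 1 - δ ≤ g c := hgc1
    have hcb : c < b := by
      rcases lt_or_eq_of_le hcab.2 with h | h
      · exact h
      · exfalso; rw [h, hgb] at hgc1; linarith [hδ.2]
    -- first time after c that g ≤ -(1-δ), or b
    set B : Set ℝ := (Icc c b ∩ g ⁻¹' (Iic (-(1 - δ)))) ∪ {b} with hBdef
    have hBcl : IsClosed B :=
      ((hgc.mono (Icc_subset_Icc hcab.1 le_rfl)).preimage_isClosed_of_isClosed
        isClosed_Icc isClosed_Iic).union isClosed_singleton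
    have hBsub : B ⊆ Icc c b := by
      rintro t (ht | ht)
      · exact ht.1
      · rw [mem_singleton_iff] at ht; subst ht; exact right_mem_Icc.2 hcb.le
    have hBcpt : IsCompact B := (isCompact_Icc (a := c) (b := b)).of_isClosed_subset hBcl hBsub
    obtain ⟨d, hdB, hdlb⟩ := hBcpt.exists_isLeast ⟨b, Or.inr rfl⟩
    have hdcb : d ∈ Icc c b := hBsub hdB
    have hgd : g d ≤ 0 := by
      rcases hdB with h | h
      · have := h.2; simp at this; linarith [hδ.2]
      · rw [mem_singleton_iff] at h; rw [h, hgb]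
    have hcd : c < d := by
      rcases lt_or_eq_of_le hdcb.1 with h | h
      · exact h
      · exfalso; rw [← h] at hgd; linarith [hδ.2]
    -- on (c, d), |g| < 1 - δ
    have hgu : ∀ t ∈ Ioo c d, g t < 1 - δ := by
      intro t ht
      by_contra hcon
      push_neg at hcon
      have htab : t ∈ Icc a b := ⟨hcab.1.trans ht.1.le, (ht.2.le.trans hdcb.2)⟩
      exact absurd (hcub ⟨htab, hcon⟩) (not_le.2 ht.1)
    have hgl : ∀ t ∈ Ioo c d, -(1 - δ) < g t := by
      intro t ht
      by_contra hcon
      push_neg at hcon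
      have : t ∈ B := Or.inl ⟨⟨ht.1.le, ht.2.le.trans hdcb.2⟩, hcon⟩
      exact absurd (hdlb this) (not_le.2 ht.2)
    -- the monotone function F
    set F : ℝ → ℝ := fun t => (∫ x in c..t, k x) + Real.arcsin (g t) with hFdef
    have hFcont : ContinuousOn F (Icc c d) := by
      apply ContinuousOn.add
      · exact (intervalIntegral.continuous_primitive
          (fun u v => hkc.intervalIntegrable u v) c).continuousOn
      · exact Real.continuous_arcsin.comp_continuousOn
          (hgc.mono (Icc_subset_Icc hcab.1 hdcb.2))
    have hFderiv : ∀ t ∈ Ioo c d, HasDerivAt F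
        (k t + (1 / Real.sqrt (1 - g t ^ 2)) * g' t) t := by
      intro t ht
      have htab : t ∈ Icc a b := ⟨hcab.1.trans ht.1.le, ht.2.le.trans hdcb.2⟩
      have h1 : g t ≠ -1 := by have := hgl t ht; intro h; rw [h] at this; linarith [hδ.1]
      have h2 : g t ≠ 1 := by have := hgu t ht; intro h; rw [h] at this; linarith [hδ.1]
      have hint : HasDerivAt (fun u => ∫ x in c..u, k x) (k t) t :=
        intervalIntegral.integral_hasDerivAt_right (hkc.intervalIntegrable c t)
          (hkc.stronglyMeasurableAtFilter _ _) hkc.continuousAt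
      have harc : HasDerivAt (fun u => Real.arcsin (g u))
          ((1 / Real.sqrt (1 - g t ^ 2)) * g' t) t :=
        (Real.hasDerivAt_arcsin h1 h2).comp t (hg t htab)
      exact hint.add harc
    have hFmono : MonotoneOn F (Icc c d) := by
      apply monotoneOn_of_deriv_nonneg (convex_Icc c d) hFcont
      · intro t ht
        rw [interior_Icc] at ht
        exact (hFderiv t ht).differentiableAt.differentiableWithinAt
      · intro t ht
        rw [interior_Icc] at ht
        rw [(hFderiv t ht).deriv]
        have htab : t ∈ Icc a b := ⟨hcab.1.trans ht.1.le, ht.2.le.trans hdcb.2⟩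
        have hb1 := hbound t htab
        have hs2 : 0 < 1 - g t ^ 2 := by
          have h1 := hgl t ht; have h2 := hgu t ht
          nlinarith [hδ.1, hδ.2]
        have hspos : 0 < Real.sqrt (1 - g t ^ 2) := Real.sqrt_pos.2 hs2
        have hsq : Real.sqrt (1 - g t ^ 2) ^ 2 = 1 - g t ^ 2 := Real.sq_sqrt hs2.le
        have habs : -(k t * Real.sqrt (1 - g t ^ 2)) ≤ g' t := neg_le_of_abs_le hb1
        have h3 : (1 / Real.sqrt (1 - g t ^ 2)) * (-(k t * Real.sqrt (1 - g t ^ 2)))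
            = -(k t) := by field_simp
        have h4 := mul_le_mul_of_nonneg_left habs (le_of_lt (one_div_pos.2 hspos))
        rw [h3] at h4
        linarith
    have hFcd : F c ≤ F d := hFmono (left_mem_Icc.2 hcd.le) (right_mem_Icc.2 hcd.le) hcd.le
    have hFc : F c = Real.arcsin (g c) := by simp [hFdef]
    have harc1 : Real.arcsin (1 - δ) ≤ Real.arcsin (g c) := Real.monotone_arcsin hgc1
    have harc2 : Real.arcsin (g d) ≤ 0 := Real.arcsin_nonpos.2 hgd
    have hmono_int : (∫ x in c..d, k x) ≤ ∫ t in a..b, k t :=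
      intervalIntegral.integral_mono_interval hcab.1 hcd.le hdcb.2
        (Filter.Eventually.of_forall hk0) (hkc.intervalIntegrable a b)
    have : Real.arcsin (g c) ≤ (∫ x in c..d, k x) + Real.arcsin (g d) := by
      rw [← hFc]; exact hFcd
    linarith
  -- take the limit δ → 0⁺
  have htend : Tendsto (fun δ : ℝ => Real.arcsin (1 - δ)) (𝓝[>] 0) (𝓝 (Real.pi / 2)) := by
    have h1 : Tendsto (fun δ : ℝ => 1 - δ) (𝓝[>] 0) (𝓝 1) := by
      have : Tendsto (fun δ : ℝ => 1 - δ) (𝓝 0) (𝓝 (1 - 0)) :=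
        tendsto_const_nhds.sub tendsto_id
      simpa using this.mono_left nhdsWithin_le_nhds
    have := (Real.continuous_arcsin.tendsto 1).comp h1
    simpa [Real.arcsin_one, Function.comp_def] using this
  refine le_of_tendsto htend ?_
  filter_upwards [Ioo_mem_nhdsGT one_pos] with δ hδ using hC δ hδ

/-- Let `γ : [0,1] → ℝ³` be a `C²` regular curve and `a = γ(t₀)`.  If a point
`b = γ(s) ≠ a` of the sub-arc `γ([t₀, v])` lies on the normal plane to `γ` at `t₀`, then the
total curvature of the sub-arc `γ([t₀, v])` is at least `π/2`. -/
theorem arcTotalCurvature_ge_of_normal_plane_intersection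
    (γ γ' γ'' : ℝ → EuclideanSpace ℝ (Fin 3))
    (hd1 : ∀ t ∈ Icc (0 : ℝ) 1, HasDerivAt γ (γ' t) t)
    (hd2 : ∀ t ∈ Icc (0 : ℝ) 1, HasDerivAt γ' (γ'' t) t)
    (hcont : ContinuousOn γ'' (Icc (0 : ℝ) 1))
    (hreg : ∀ t ∈ Icc (0 : ℝ) 1, γ' t ≠ 0)
    (t₀ v : ℝ) (ht₀ : t₀ ∈ Icc (0 : ℝ) 1) (hv : v ∈ Icc t₀ 1)
    (s : ℝ) (hs : s ∈ Icc t₀ v)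
    (hb : γ s ≠ γ t₀)
    (hplane : (inner ℝ (γ s - γ t₀) (γ' t₀) : ℝ) = 0) :
    Real.pi / 2 ≤ arcTotalCurvature γ' γ'' t₀ v := by
  have hsub : Icc t₀ v ⊆ Icc (0:ℝ) 1 := Icc_subset_Icc ht₀.1 hv.2
  have ht₀s : t₀ < s := by
    rcases lt_or_eq_of_le hs.1 with h | h
    · exact h
    · exact absurd (congrArg γ h.symm) hb
  have hsv : s ≤ v := hs.2
  -- Rolle's theorem applied to ⟪γ t - γ t₀, γ' t₀⟫
  have hfd : ∀ t ∈ Icc (0:ℝ) 1,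
      HasDerivAt (fun u => (inner ℝ (γ u - γ t₀) (γ' t₀) : ℝ)) (inner ℝ (γ' t) (γ' t₀) : ℝ) t := by
    intro t ht
    have := HasDerivAt.inner ℝ ((hd1 t ht).sub_const (γ t₀)) (hasDerivAt_const t (γ' t₀))
    simpa using this
  have hsub2 : Icc t₀ s ⊆ Icc (0:ℝ) 1 := Icc_subset_Icc ht₀.1 (hsv.trans hv.2)
  obtain ⟨ξ, hξmem, hξ0⟩ := exists_hasDerivAt_eq_zero (f' := fun t => (inner ℝ (γ' t) (γ' t₀) : ℝ))
    ht₀s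
    (fun t ht => ((hfd t (hsub2 ht)).continuousAt).continuousWithinAt)
    (by simp [hplane])
    (fun x hx => hfd x (hsub2 (Ioo_subset_Icc_self hx)))
  have hξv : ξ ≤ v := hξmem.2.le.trans hsv
  have hξI : Icc t₀ ξ ⊆ Icc (0:ℝ) 1 := Icc_subset_Icc ht₀.1 (hξv.trans hv.2)
  -- notation
  set n : ℝ → ℝ := fun t => ‖γ' t‖ with hn
  set T : ℝ → EuclideanSpace ℝ (Fin 3) := fun t => (n t)⁻¹ • γ' t with hT
  set p : ℝ → ℝ := fun t => (inner ℝ (γ' t) (γ'' t) : ℝ) with hp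
  set T' : ℝ → EuclideanSpace ℝ (Fin 3) :=
    fun t => (n t)⁻¹ • γ'' t + (-(p t / n t) / n t ^ 2) • γ' t with hT'
  set e : EuclideanSpace ℝ (Fin 3) := T t₀ with he
  set g : ℝ → ℝ := fun t => (inner ℝ (T t) e : ℝ) with hg
  set E : ℝ → ℝ := fun t => ‖γ' t‖ ^ 2 * ‖γ'' t‖ ^ 2 - p t ^ 2 with hE
  set k : ℝ → ℝ := fun t => Real.sqrt (E t) / ‖γ' t‖ ^ 2 with hk
  have hnpos : ∀ t ∈ Icc (0:ℝ) 1, 0 < n t := fun t ht => norm_pos_iff.2 (hreg t ht)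
  -- derivative of T
  have hTd : ∀ t ∈ Icc (0:ℝ) 1, HasDerivAt T (T' t) t := by
    intro t ht
    have hnt := (hnpos t ht).ne'
    have hq : HasDerivAt (fun u => (inner ℝ (γ' u) (γ' u) : ℝ)) (2 * p t) t := by
      have h := HasDerivAt.inner ℝ (hd2 t ht) (hd2 t ht)
      refine h.congr_deriv ?_
      have hcomm : (inner ℝ (γ'' t) (γ' t) : ℝ) = inner ℝ (γ' t) (γ'' t) := real_inner_comm _ _
      simp only [hp, hcomm]
      ring
    have hqe : ∀ u, Real.sqrt (inner ℝ (γ' u) (γ' u) : ℝ) = n u := by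
      intro u
      rw [real_inner_self_eq_norm_sq, Real.sqrt_sq (norm_nonneg _)]
    have hqt : (inner ℝ (γ' t) (γ' t) : ℝ) ≠ 0 := by
      rw [real_inner_self_eq_norm_sq]; positivity
    have hnd : HasDerivAt n (p t / n t) t := by
      have h2 := (Real.hasDerivAt_sqrt hqt).comp t hq
      simp only [Function.comp_def, hqe] at h2
      refine h2.congr_deriv ?_
      field_simp
    have hinv : HasDerivAt (fun u => (n u)⁻¹) (-(p t / n t) / n t ^ 2) t := hnd.inv hnt
    exact hinv.smul (hd2 t ht)
  have hTnorm : ∀ t ∈ Icc (0:ℝ) 1, ‖T t‖ = 1 := by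
    intro t ht
    have hnt := (hnpos t ht).ne'
    simp only [hT, norm_smul, norm_inv, norm_norm, Real.norm_eq_abs]
    rw [abs_of_pos (hnpos t ht), inv_mul_cancel₀ hnt]
  -- values of g
  have hgt₀ : g t₀ = 1 := by
    simp only [hg, he, real_inner_self_eq_norm_sq]
    rw [hTnorm t₀ ht₀]; norm_num
  have hgξ : g ξ = 0 := by
    simp only [hg, he, hT, real_inner_smul_left, real_inner_smul_right, hξ0]
    ring
  -- derivative of g
  have hgd : ∀ t ∈ Icc (0:ℝ) 1, HasDerivAt g (inner ℝ (T' t) e : ℝ) t := by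
    intro t ht
    have := HasDerivAt.inner ℝ (hTd t ht) (hasDerivAt_const t e)
    simpa using this
  -- E is nonnegative
  have hE0 : ∀ t, 0 ≤ E t := by
    intro t
    have h := abs_real_inner_le_norm (γ' t) (γ'' t)
    have := sq_abs (p t)
    simp only [hE]
    nlinarith [abs_nonneg (p t), norm_nonneg (γ' t), norm_nonneg (γ'' t)]
  -- norm of T'
  have hT'norm : ∀ t ∈ Icc (0:ℝ) 1, ‖T' t‖ = k t := by
    intro t ht
    have hnt : 0 < n t := hnpos t ht
    have hsq : ‖T' t‖ ^ 2 = E t / n t ^ 4 := by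
      rw [← real_inner_self_eq_norm_sq]
      simp only [hT', inner_add_add_self, real_inner_smul_left, real_inner_smul_right]
      rw [real_inner_self_eq_norm_sq (γ' t), real_inner_self_eq_norm_sq (γ'' t)]
      have h1 : (inner ℝ (γ'' t) (γ' t) : ℝ) = p t := real_inner_comm _ _
      have h2 : (inner ℝ (γ' t) (γ'' t) : ℝ) = p t := rfl
      rw [h1, h2]
      have hn2 : ‖γ' t‖ = n t := rfl
      rw [hn2]
      field_simp
      ring
    have : ‖T' t‖ = Real.sqrt (E t / n t ^ 4) := by
      rw [← hsq, Real.sqrt_sq (norm_nonneg _)]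
    rw [this, Real.sqrt_div (hE0 t)]
    have h4 : Real.sqrt (n t ^ 4) = ‖γ' t‖ ^ 2 := by
      rw [show n t ^ 4 = (n t ^ 2) ^ 2 by ring, Real.sqrt_sq (by positivity)]
    rw [h4]
  -- the key bound |g'| ≤ k √(1-g²)
  have hbound : ∀ t ∈ Icc (0:ℝ) 1,
      |(inner ℝ (T' t) e : ℝ)| ≤ k t * Real.sqrt (1 - g t ^ 2) := by
    intro t ht
    have hnt : 0 < n t := hnpos t ht
    have hTT' : (inner ℝ (T' t) (T t) : ℝ) = 0 := by
      simp only [hT', hT, inner_add_left, real_inner_smul_left, real_inner_smul_right]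
      rw [show (inner ℝ (γ'' t) (γ' t) : ℝ) = p t from real_inner_comm _ _,
        real_inner_self_eq_norm_sq (γ' t)]
      have hn2 : ‖γ' t‖ = n t := rfl
      rw [hn2]
      field_simp
      ring
    have hstep : (inner ℝ (T' t) e : ℝ) = inner ℝ (T' t) (e - g t • T t) := by
      rw [inner_sub_right, real_inner_smul_right (T' t) (T t) (g t), hTT']
      ring
    have hnorme : ‖e - g t • T t‖ = Real.sqrt (1 - g t ^ 2) := by
      have h1 : ‖e - g t • T t‖ ^ 2 = 1 - g t ^ 2 := by
        have hTe : ‖e‖ = 1 := by rw [he]; exact hTnorm t₀ ht₀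
        rw [norm_sub_sq_real, real_inner_smul_right e (T t) (g t), norm_smul (g t) (T t)]
        rw [hTe, hTnorm t ht]
        have hcomm : (inner ℝ e (T t) : ℝ) = g t := real_inner_comm _ _
        rw [hcomm]
        simp [Real.norm_eq_abs, sq_abs]
        ring
      rw [← h1, Real.sqrt_sq (norm_nonneg _)]
    calc |(inner ℝ (T' t) e : ℝ)| = |(inner ℝ (T' t) (e - g t • T t) : ℝ)| := by rw [hstep]
      _ ≤ ‖T' t‖ * ‖e - g t • T t‖ := abs_real_inner_le_norm _ _
      _ = k t * Real.sqrt (1 - g t ^ 2) := by rw [hT'norm t ht, hnorme]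
  -- continuity of k on [0,1]
  have hγ'c : ContinuousOn γ' (Icc (0:ℝ) 1) :=
    fun t ht => ((hd2 t ht).continuousAt).continuousWithinAt
  have hkcOn : ContinuousOn k (Icc (0:ℝ) 1) := by
    apply ContinuousOn.div
    · apply Real.continuous_sqrt.comp_continuousOn
      exact ((hγ'c.norm.pow 2).mul (hcont.norm.pow 2)).sub ((hγ'c.inner hcont).pow 2)
    · exact hγ'c.norm.pow 2
    · intro t ht
      exact pow_ne_zero 2 (norm_ne_zero_iff.2 (hreg t ht))
  -- nonnegativity of k (everywhere, by its formula)
  have hk0 : ∀ t, 0 ≤ k t := by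
    intro t
    simp only [hk]
    positivity
  -- clamp k to a globally continuous function K
  set clamp : ℝ → ℝ := fun t => max 0 (min t 1) with hclamp
  have hclampc : Continuous clamp := continuous_const.max (continuous_id.min continuous_const)
  have hclampmem : ∀ t, clamp t ∈ Icc (0:ℝ) 1 :=
    fun t => ⟨le_max_left _ _, max_le zero_le_one (min_le_right _ _)⟩
  set K : ℝ → ℝ := fun t => k (clamp t) with hK
  have hKc : Continuous K := hkcOn.comp_continuous hclampc hclampmem
  have hKeq : ∀ t ∈ Icc (0:ℝ) 1, K t = k t := by
    intro t ht
    simp only [hK, hclamp]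
    rw [min_eq_left ht.2, max_eq_right ht.1]
  have hK0 : ∀ t, 0 ≤ K t := fun t => hk0 _
  -- apply the key lemma on [t₀, ξ]
  have hkey : Real.pi / 2 ≤ ∫ t in t₀..ξ, K t := by
    apply key_arcsin_bound (g := g) (g' := fun t => (inner ℝ (T' t) e : ℝ)) hξmem.1 hKc hK0
    · exact fun t ht => hgd t (hξI ht)
    · intro t ht
      rw [hKeq t (hξI ht)]
      exact hbound t (hξI ht)
    · exact hgt₀
    · exact hgξ
  have hmono : (∫ t in t₀..ξ, K t) ≤ ∫ t in t₀..v, K t :=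
    intervalIntegral.integral_mono_interval le_rfl hξmem.1.le hξv
      (Filter.Eventually.of_forall hK0) (hKc.intervalIntegrable t₀ v)
  have hfinal : (∫ t in t₀..v, K t) = arcTotalCurvature γ' γ'' t₀ v := by
    rw [arcTotalCurvature]
    apply intervalIntegral.integral_congr
    intro t ht
    rw [uIcc_of_le hv.1] at ht
    rw [hKeq t (hsub ht)]
    simp only [hk, hE, hp]
    rw [cross3_norm]
  linarith
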